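/- If (a, f) solves the Bryant soliton ODEs with initial behavior a(0)=0, a'(0)=1, f'(0)=0, and α > 0 (i.e., a(r) = r + αr³ + ..., f'(r) = 12αr + ...), then a' > 1 and f' > 0 on some interval (0, δ), and the solution cannot extend to a nonsingular solution on all of [0, ∞) with a > 0 and bounded curvature; in contrast, only α < 0 yields solutions defined on all of [0, ∞). -/

import Mathlib

open Set Filter Asymptotics Topology
open scoped Nat

/-!
For `α > 0` Taylor's theorem gives `a''(0) = 0` and `a'''(0) = 6α`, so `a'' > 0` and `a' > 1`
just to the right of `0`. For a global solution `(b, g)` the ODE implies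
`b''' = g' b'' + (b'² - 1) b' / b²`, so `b''` cannot return to zero while `b' > 1`: hence
`b'' > 0` and `b' > 1` on all of `(0, ∞)`, and `g' > 0` is increasing. The quantities
`u = b'/b = logDeriv b` and `ζ = g' - 2u` satisfy `ζ' = 2u²` and `u' = uζ + 1/b²`. As `g'` stays
bounded below, `ζ` becomes positive, after which `u` grows at least linearly. But a bound on the
curvature `(1 - b'²)/b²`, together with `b ≥ b(1)`, bounds `u`.
-/

theorem eq_zero_of_mul_pow_isLittleO {𝕜 : Type*} [NontriviallyNormedField 𝕜] {c : 𝕜} {n : ℕ}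
    (h : (fun x : 𝕜 => c * x ^ n) =o[𝓝 0] (· ^ n)) : c = 0 := by
  by_contra hc
  refine isLittleO_irrefl ?_ (by simpa [hc] using h.const_mul_left c⁻¹)
  exact ((eventually_mem_nhdsWithin (s := {(0 : 𝕜)}ᶜ)).mono fun x hx =>
    pow_ne_zero n hx).frequently.filter_mono nhdsWithin_le_nhds

theorem eq_zero_of_sum_mul_pow_isLittleO {𝕜 : Type*} [NontriviallyNormedField 𝕜] {c : ℕ → 𝕜} :
    ∀ {n : ℕ}, (fun x : 𝕜 => ∑ k ∈ Finset.range (n + 1), c k * x ^ k) =o[𝓝 0] (· ^ n) →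
      ∀ k ≤ n, c k = 0
  | 0, h, k, hk => by
    simpa [Nat.le_zero.mp hk] using eq_zero_of_mul_pow_isLittleO (n := 0) (by simpa using h)
  | n + 1, h, k, hk => by
    simp only [Finset.sum_range_succ _ (n + 1)] at h
    have htop : (fun x : 𝕜 => c (n + 1) * x ^ (n + 1)) =o[𝓝 0] (· ^ n) :=
      (isLittleO_pow_pow n.lt_succ_self).const_mul_left _
    have hlow := eq_zero_of_sum_mul_pow_isLittleO <|
      ((h.trans (isLittleO_pow_pow n.lt_succ_self)).sub htop).congr_left
        fun x => add_sub_cancel_right _ _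
    rcases hk.lt_or_eq with hk | rfl
    · exact hlow k (Nat.lt_succ_iff.mp hk)
    · refine eq_zero_of_mul_pow_isLittleO <| h.congr_left fun x => ?_
      rw [Finset.sum_eq_zero fun j hj => by rw [hlow j (Finset.mem_range_succ_iff.mp hj), zero_mul],
        zero_add]

theorem eventually_pos_right_of_deriv_pos {h : ℝ → ℝ} {x₀ : ℝ} (hd : 0 < deriv h x₀)
    (h₀ : h x₀ = 0) : ∀ᶠ x in 𝓝[>] x₀, 0 < h x := by
  filter_upwards [nhdsWithin_le_nhds (eventually_nhdsWithin_sign_eq_of_deriv_pos hd h₀),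
    self_mem_nhdsWithin] with x hsign hx
  rwa [sign_pos (sub_pos.mpr hx), sign_eq_one_iff] at hsign

theorem eventually_neg_left_of_deriv_pos {h : ℝ → ℝ} {x₀ : ℝ} (hd : 0 < deriv h x₀)
    (h₀ : h x₀ = 0) : ∀ᶠ x in 𝓝[<] x₀, h x < 0 := by
  filter_upwards [nhdsWithin_le_nhds (eventually_nhdsWithin_sign_eq_of_deriv_pos hd h₀),
    self_mem_nhdsWithin] with x hsign hx
  rwa [sign_neg (sub_neg.mpr hx), sign_eq_neg_one_iff] at hsign

section TaylorCoefficients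

open Polynomial

theorem iteratedDeriv_eq_factorial_mul_coeff_of_isLittleO {u : ℝ → ℝ} {n : ℕ}
    (hu : ContDiff ℝ n u) {p : ℝ[X]} (hp : p.natDegree ≤ n)
    (h : (fun r => u r - p.eval r) =o[𝓝 0] (· ^ n)) {k : ℕ} (hk : k ≤ n) :
    iteratedDeriv k u 0 = k ! * p.coeff k := by
  have hsum : (fun r : ℝ => ∑ k ∈ Finset.range (n + 1),
      ((k ! : ℝ)⁻¹ * iteratedDeriv k u 0 - p.coeff k) * r ^ k) =o[𝓝 0] (· ^ n) := by
    refine (h.sub (by simpa using taylor_isLittleO_univ (x₀ := 0) hu)).congr_left fun r => ?_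
    rw [taylor_within_apply, eval_eq_sum_range' (Nat.lt_succ_of_le hp)]
    simp only [sub_zero, smul_eq_mul, iteratedDerivWithin_univ, sub_mul, Finset.sum_sub_distrib]
    rw [sub_sub_sub_cancel_left, Nat.succ_eq_add_one]
    simp only [mul_right_comm]
  have hcoeff := eq_zero_of_sum_mul_pow_isLittleO hsum k hk
  have : (k ! : ℝ) ≠ 0 := by positivity
  field_simp at hcoeff
  linarith

theorem eventually_one_lt_deriv_and_deriv_deriv_pos_of_isBigO {u : ℝ → ℝ} {β : ℝ} (hβ : 0 < β)
    (hu : ContDiff ℝ 3 u) (h : (fun r => u r - (r + β * r ^ 3)) =O[𝓝 0] (· ^ 5)) :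
    ∀ᶠ r in 𝓝[>] 0, 1 < deriv u r ∧ 0 < deriv (deriv u) r := by
  have hdeg : (X + C β * X ^ 3 : ℝ[X]).natDegree ≤ 3 := by compute_degree
  have hcoeff {k : ℕ} (hk : k ≤ 3) := iteratedDeriv_eq_factorial_mul_coeff_of_isLittleO hu hdeg
    (by simpa using h.trans_isLittleO (isLittleO_pow_pow (by norm_num : 3 < 5))) hk
  have h1 : deriv u 0 = 1 := by simpa using hcoeff (k := 1) (by norm_num)
  have h2 : deriv (deriv u) 0 = 0 := by
    simpa [iteratedDeriv_succ, coeff_X] using hcoeff (k := 2) (by norm_num)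
  have h3 : deriv (deriv (deriv u)) 0 = 6 * β := by
    simpa [iteratedDeriv_succ, Nat.factorial, coeff_X] using hcoeff (k := 3) (by norm_num)
  obtain ⟨δ, hδ, hδpos⟩ := (nhdsGT_basis 0).eventually_iff.mp
    (eventually_pos_right_of_deriv_pos (h3 ▸ by positivity) h2)
  filter_upwards [Ioo_mem_nhdsGT hδ] with r hr
  refine ⟨h1 ▸ strictMonoOn_of_deriv_pos (convex_Icc 0 r)
    (hu.continuous_deriv (by norm_num)).continuousOn (fun x hx => ?_)
    (left_mem_Icc.mpr hr.1.le) (right_mem_Icc.mpr hr.1.le) hr.1, hδpos hr⟩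
  rw [interior_Icc] at hx
  exact hδpos ⟨hx.1, hx.2.trans hr.2⟩

end TaylorCoefficients

theorem eventually_pos_of_sub_mul_isLittleO {v : ℝ → ℝ} {c : ℝ} (hc : 0 < c)
    (h : (fun r => v r - c * r) =o[𝓝 0] fun r => r) : ∀ᶠ r in 𝓝[>] 0, 0 < v r := by
  filter_upwards [nhdsWithin_le_nhds (h.bound (half_pos hc)), self_mem_nhdsWithin]
    with r hr hr0
  rw [Real.norm_eq_abs, Real.norm_eq_abs, abs_of_pos (mem_Ioi.mp hr0)] at hr
  nlinarith [neg_abs_le (v r - c * r), mem_Ioi.mp hr0]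

theorem pos_of_deriv_pos_at_first_zero {h : ℝ → ℝ} (hc : Continuous h)
    (hnear : ∀ᶠ r in 𝓝[>] 0, 0 < h r)
    (hzero : ∀ r > 0, (∀ s ∈ Ioo 0 r, 0 < h s) → h r = 0 → 0 < deriv h r) :
    ∀ r > 0, 0 < h r := by
  obtain ⟨δ, hδ, hδpos⟩ := (nhdsGT_basis 0).eventually_iff.mp hnear
  by_contra! ⟨r, hr, hle⟩
  set T := {x | δ / 2 ≤ x ∧ h x ≤ 0}
  have hT : IsClosed T :=
    (isClosed_le continuous_const continuous_id).inter (isClosed_le hc continuous_const)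
  have hTbdd : BddBelow T := ⟨δ / 2, fun x hx => hx.1⟩
  have hrT : r ∈ T := ⟨not_lt.mp fun hlt => (hδpos ⟨hr, by linarith⟩).not_ge hle, hle⟩
  have hr₀T : sInf T ∈ T := hT.csInf_mem ⟨r, hrT⟩ hTbdd
  have hr₀ : 0 < sInf T := by linarith [hr₀T.1]
  have hbefore : ∀ s ∈ Ioo 0 (sInf T), 0 < h s := fun s hs => by
    by_cases hsδ : s < δ
    · exact hδpos ⟨hs.1, hsδ⟩
    · by_contra! hs0
      exact (csInf_le hTbdd ⟨by linarith, hs0⟩).not_gt hs.2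
  have hzero₀ : h (sInf T) = 0 := by
    refine le_antisymm hr₀T.2 (ge_of_tendsto
      ((hc.tendsto _).mono_left (nhdsWithin_le_nhds (s := Iio (sInf T)))) ?_)
    filter_upwards [Ioo_mem_nhdsLT hr₀] with s hs using (hbefore s hs).le
  obtain ⟨s, hneg, hs⟩ := ((eventually_neg_left_of_deriv_pos
    (hzero _ hr₀ hbefore hzero₀) hzero₀).and (Ioo_mem_nhdsLT hr₀)).exists
  exact hneg.not_gt (hbefore s hs)

theorem mul_sub_le_image_sub_of_le_hasDerivAt_Ici {F F' : ℝ → ℝ} {a c : ℝ}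
    (hF : ∀ x ≥ a, HasDerivAt F (F' x) x) (hc : ∀ x > a, c ≤ F' x) {x y : ℝ}
    (hx : a ≤ x) (hxy : x ≤ y) : c * (y - x) ≤ F y - F x := by
  refine (convex_Ici a).mul_sub_le_image_sub_of_le_deriv
    (fun z hz => (hF z hz).continuousAt.continuousWithinAt)
    (fun z hz => (hF z (interior_subset hz)).differentiableAt.differentiableWithinAt)
    (fun z hz => ?_) x hx y (hx.trans hxy) hxy
  rw [interior_Ici] at hz
  exact (hF z hz.le).deriv ▸ hc z hz

theorem hasDerivAt_logDeriv {f : ℝ → ℝ} {x : ℝ} (hf : DifferentiableAt ℝ f x)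
    (hf' : DifferentiableAt ℝ (deriv f) x) (hx : f x ≠ 0) :
    HasDerivAt (logDeriv f) (deriv (deriv f) x / f x - logDeriv f x ^ 2) x := by
  refine (hf'.hasDerivAt.div hf.hasDerivAt hx).congr_deriv ?_
  rw [logDeriv_apply]
  field_simp

def IsBryantSolutionAt (b g : ℝ → ℝ) (r : ℝ) : Prop :=
  0 < b r ∧ deriv (deriv g) r = 2 * deriv (deriv b) r / b r ∧
    deriv (deriv b) r = deriv g r * deriv b r + (1 - deriv b r ^ 2) / b r

section BryantSolution

variable {b g : ℝ → ℝ}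

theorem hasDerivAt_deriv_deriv_of_isBryantSolution (hb : ContDiff ℝ 3 b) (hg : ContDiff ℝ 2 g)
    (hsol : ∀ r > 0, IsBryantSolutionAt b g r) {r : ℝ} (hr : 0 < r) :
    HasDerivAt (deriv (deriv b))
      (deriv g r * deriv (deriv b) r + (deriv b r ^ 2 - 1) * deriv b r / b r ^ 2) r := by
  obtain ⟨hbr, hg'', -⟩ := hsol r hr
  have hb₂ : ContDiff ℝ 2 (deriv b) := hb.deriv'
  have hg₁ : ContDiff ℝ 1 (deriv g) := hg.deriv'
  have hb' := (hb₂.differentiable (by norm_num) r).hasDerivAt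
  have hrhs := ((hg₁.differentiable (by norm_num) r).hasDerivAt.mul hb').add
    (((hb'.pow 2).const_sub 1).div (hb.differentiable (by norm_num) r).hasDerivAt hbr.ne')
  refine (hrhs.congr_of_eventuallyEq ?_).congr_deriv ?_
  · filter_upwards [Ioi_mem_nhds hr] with s hs using (hsol s hs).2.2
  · rw [hg'', Pi.pow_apply]
    field_simp
    ring

theorem hasDerivAt_logDeriv_of_isBryantSolution (hb : ContDiff ℝ 2 b) {r : ℝ}
    (hsol : IsBryantSolutionAt b g r) :
    HasDerivAt (logDeriv b) (logDeriv b r * (deriv g r - 2 * logDeriv b r) + 1 / b r ^ 2) r := by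
  have hb₁ : ContDiff ℝ 1 (deriv b) := hb.deriv'
  refine (hasDerivAt_logDeriv (hb.differentiable (by norm_num) r)
    (hb₁.differentiable (by norm_num) r) hsol.1.ne').congr_deriv ?_
  have := hsol.1.ne'
  rw [hsol.2.2, logDeriv_apply]
  field_simp
  ring

theorem hasDerivAt_deriv_sub_two_mul_logDeriv (hb : ContDiff ℝ 2 b) (hg : ContDiff ℝ 2 g)
    {r : ℝ} (hsol : IsBryantSolutionAt b g r) :
    HasDerivAt (fun s => deriv g s - 2 * logDeriv b s) (2 * logDeriv b r ^ 2) r := by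
  have hb₁ : ContDiff ℝ 1 (deriv b) := hb.deriv'
  have hg₁ : ContDiff ℝ 1 (deriv g) := hg.deriv'
  refine ((hg₁.differentiable (by norm_num) r).hasDerivAt.sub
    ((hasDerivAt_logDeriv (hb.differentiable (by norm_num) r)
      (hb₁.differentiable (by norm_num) r) hsol.1.ne').const_mul 2)).congr_deriv ?_
  rw [hsol.2.1]
  ring

theorem one_lt_deriv_of_deriv_deriv_pos (hb : Continuous (deriv b))
    (hstart : ∀ᶠ r in 𝓝[>] 0, 1 < deriv b r) {r : ℝ} (hr : 0 < r)
    (hpos : ∀ s ∈ Ioo 0 r, 0 < deriv (deriv b) s) : 1 < deriv b r := by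
  obtain ⟨s, hs1, hs⟩ := (hstart.and (Ioo_mem_nhdsGT hr)).exists
  refine hs1.trans (strictMonoOn_of_deriv_pos (convex_Icc s r) hb.continuousOn (fun x hx => ?_)
    (left_mem_Icc.mpr hs.2.le) (right_mem_Icc.mpr hs.2.le) hs.2)
  rw [interior_Icc] at hx
  exact hpos x ⟨hs.1.trans hx.1, hx.2⟩

theorem deriv_deriv_pos_of_isBryantSolution (hb : ContDiff ℝ 3 b) (hg : ContDiff ℝ 2 g)
    (hsol : ∀ r > 0, IsBryantSolutionAt b g r)
    (hstart : ∀ᶠ r in 𝓝[>] 0, 1 < deriv b r ∧ 0 < deriv (deriv b) r) :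
    ∀ r > 0, 0 < deriv (deriv b) r := by
  have hb₁ : ContDiff ℝ 1 (deriv (deriv b)) := hb.deriv'.deriv'
  refine pos_of_deriv_pos_at_first_zero hb₁.continuous
    (hstart.mono fun _ h => h.2) fun r hr hbefore hzero => ?_
  have hb' := one_lt_deriv_of_deriv_deriv_pos (hb.continuous_deriv (by norm_num))
    (hstart.mono fun _ h => h.1) hr hbefore
  rw [(hasDerivAt_deriv_deriv_of_isBryantSolution hb hg hsol hr).deriv, hzero, mul_zero, zero_add]
  have := (hsol r hr).1
  have : 0 < deriv b r ^ 2 - 1 := by nlinarith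
  positivity

theorem one_lt_deriv_of_isBryantSolution (hb : ContDiff ℝ 3 b) (hg : ContDiff ℝ 2 g)
    (hsol : ∀ r > 0, IsBryantSolutionAt b g r)
    (hstart : ∀ᶠ r in 𝓝[>] 0, 1 < deriv b r ∧ 0 < deriv (deriv b) r) :
    ∀ r > 0, 1 < deriv b r := fun r hr =>
  one_lt_deriv_of_deriv_deriv_pos (hb.continuous_deriv (by norm_num))
    (hstart.mono fun _ h => h.1) hr fun s hs =>
      deriv_deriv_pos_of_isBryantSolution hb hg hsol hstart s hs.1

theorem exists_pos_deriv_sub_two_mul_logDeriv (hb : ContDiff ℝ 2 b) (hg : ContDiff ℝ 2 g)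
    (hsol : ∀ r > 0, IsBryantSolutionAt b g r) (hb'' : ∀ r > 0, 0 < deriv (deriv b) r)
    (hb' : ∀ r > 0, 1 < deriv b r) : ∃ r > 0, 0 < deriv g r - 2 * logDeriv b r := by
  by_contra! hneg
  have hg₁ : ContDiff ℝ 1 (deriv g) := hg.deriv'
  set m := deriv g 1
  have hm : 0 < m := by
    obtain ⟨hb1, -, hode⟩ := hsol 1 one_pos
    have : (1 - deriv b 1 ^ 2) / b 1 < 0 :=
      div_neg_of_neg_of_pos (by nlinarith [hb' 1 one_pos]) hb1
    nlinarith [hb' 1 one_pos, hb'' 1 one_pos]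
  have hg'_ge : ∀ x ≥ 1, m ≤ deriv g x := fun x hx => by
    have := mul_sub_le_image_sub_of_le_hasDerivAt_Ici (c := 0)
      (fun y _ => (hg₁.differentiable (by norm_num) y).hasDerivAt) (fun y hy => ?_) le_rfl hx
    · linarith
    · rw [(hsol y (by linarith)).2.1]
      exact (div_pos (mul_pos two_pos (hb'' y (by linarith))) (hsol y (by linarith)).1).le
  -- While `ζ ≤ 0`, `2u ≥ g' ≥ m` gives `ζ' = 2u² ≥ m²/2`; by time `R` it has gained `1 - ζ(1)`.
  set R := 1 + 2 * (1 - (deriv g 1 - 2 * logDeriv b 1)) / m ^ 2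
  have hR : 1 ≤ R :=
    le_add_of_nonneg_right (div_nonneg (by linarith [hneg 1 one_pos]) (by positivity))
  have hgrowth := mul_sub_le_image_sub_of_le_hasDerivAt_Ici (c := m ^ 2 / 2)
    (fun x hx => hasDerivAt_deriv_sub_two_mul_logDeriv hb hg (hsol x (by linarith)))
    (fun x hx => by nlinarith [hneg x (by linarith), hg'_ge x hx.le]) le_rfl hR
  have hRm : m ^ 2 / 2 * (R - 1) = 1 - (deriv g 1 - 2 * logDeriv b 1) := by
    simp only [R]
    field_simp
    ring
  linarith [hneg R (by linarith)]

theorem tendsto_logDeriv_atTop_of_isBryantSolution (hb : ContDiff ℝ 3 b) (hg : ContDiff ℝ 2 g)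
    (hsol : ∀ r > 0, IsBryantSolutionAt b g r)
    (hstart : ∀ᶠ r in 𝓝[>] 0, 1 < deriv b r ∧ 0 < deriv (deriv b) r) :
    Tendsto (logDeriv b) atTop atTop := by
  have hb₂ : ContDiff ℝ 2 b := hb.of_le (by norm_num)
  have hb' := one_lt_deriv_of_isBryantSolution hb hg hsol hstart
  obtain ⟨r₁, hr₁, hη⟩ := exists_pos_deriv_sub_two_mul_logDeriv hb₂ hg hsol
    (deriv_deriv_pos_of_isBryantSolution hb hg hsol hstart) hb'
  set η := deriv g r₁ - 2 * logDeriv b r₁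
  have hu : ∀ x > 0, 0 < logDeriv b x := fun x hx =>
    div_pos (by linarith [hb' x hx]) (hsol x hx).1
  have hζ : ∀ x ≥ r₁, η ≤ deriv g x - 2 * logDeriv b x := fun x hx => by
    have := mul_sub_le_image_sub_of_le_hasDerivAt_Ici (c := 0)
      (fun y hy => hasDerivAt_deriv_sub_two_mul_logDeriv hb₂ hg (hsol y (by linarith)))
      (fun y _ => by positivity) le_rfl hx
    linarith
  have hu' (x : ℝ) (hx : x ≥ r₁) :=
    hasDerivAt_logDeriv_of_isBryantSolution hb₂ (hsol x (by linarith))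
  have hb_inv (x : ℝ) (hx : x > r₁) : 0 < 1 / b x ^ 2 := by
    have := (hsol x (by linarith)).1
    positivity
  have hmono : ∀ x ≥ r₁, logDeriv b r₁ ≤ logDeriv b x := fun x hx => by
    have := mul_sub_le_image_sub_of_le_hasDerivAt_Ici (c := 0) hu' (fun y hy => by
      nlinarith [hu y (by linarith), hζ y hy.le, hb_inv y hy]) le_rfl hx
    linarith
  have hlin : ∀ x ≥ r₁, logDeriv b r₁ + η * logDeriv b r₁ * (x - r₁) ≤ logDeriv b x :=
    fun x hx => by
      have := mul_sub_le_image_sub_of_le_hasDerivAt_Ici (c := η * logDeriv b r₁) hu'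
        (fun y hy => by nlinarith [hu y (by linarith), hζ y hy.le, hb_inv y hy, hmono y hy.le])
        le_rfl hx
      linarith
  exact tendsto_atTop_mono' _ ((eventually_ge_atTop r₁).mono hlin) <|
    tendsto_atTop_add_const_left _ _ <| Tendsto.const_mul_atTop (mul_pos hη (hu r₁ hr₁))
      (tendsto_atTop_add_const_right _ (-r₁) tendsto_id)

theorem not_exists_curvature_bound_of_isBryantSolution (hb : ContDiff ℝ 3 b)
    (hg : ContDiff ℝ 2 g) (hsol : ∀ r > 0, IsBryantSolutionAt b g r)
    (hstart : ∀ᶠ r in 𝓝[>] 0, 1 < deriv b r ∧ 0 < deriv (deriv b) r) :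
    ¬ ∃ C : ℝ, ∀ r > 0, |(1 - deriv b r ^ 2) / b r ^ 2| ≤ C := by
  rintro ⟨C, hC⟩
  have hb' := one_lt_deriv_of_isBryantSolution hb hg hsol hstart
  have hb1 := (hsol 1 one_pos).1
  have hbmono : ∀ x ≥ 1, b 1 ≤ b x := fun x hx => by
    have := mul_sub_le_image_sub_of_le_hasDerivAt_Ici (c := 0)
      (fun y _ => (hb.differentiable (by norm_num) y).hasDerivAt)
      (fun y hy => (one_pos.trans (hb' y (by linarith))).le) le_rfl hx
    linarith
  have hbound : ∀ x ≥ 1, logDeriv b x ^ 2 ≤ C + 1 / b 1 ^ 2 := fun x hx => by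
    have hbx := (hsol x (by linarith)).1
    have hsplit : logDeriv b x ^ 2 = -((1 - deriv b x ^ 2) / b x ^ 2) + 1 / b x ^ 2 := by
      rw [logDeriv_apply]
      field_simp
      ring
    rw [hsplit]
    gcongr
    · exact (neg_le_abs _).trans (hC x (by linarith))
    · exact hbmono x hx
  obtain ⟨x, hxbig, hx⟩ := (((tendsto_logDeriv_atTop_of_isBryantSolution hb hg hsol
    hstart).eventually_gt_atTop (|C| + 1 / b 1 ^ 2 + 1)).and (eventually_ge_atTop 1)).exists
  nlinarith [hbound x hx, le_abs_self C, one_div_pos.mpr (pow_pos hb1 2)]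

end BryantSolution

theorem bryant_ode_positive_alpha_singular_general (a f : ℝ → ℝ) (α : ℝ) (hα : 0 < α)
    (ha : ContDiff ℝ ⊤ a)
    (haexp : (fun r => a r - (r + α * r ^ 3)) =O[nhds (0 : ℝ)] fun r => r ^ 5)
    (hfexp : (fun r => deriv f r - 12 * α * r) =O[nhds (0 : ℝ)] fun r => r ^ 3) :
    -- (i) a' > 1 and f' > 0 near the origin
    (∃ δ > 0, ∀ r ∈ Ioo 0 δ, 1 < deriv a r ∧ 0 < deriv f r) ∧
    -- (ii) no extension to a nonsingular global solution with a > 0 and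
    -- bounded curvature
    (¬ ∃ b g : ℝ → ℝ, ContDiff ℝ ⊤ b ∧ ContDiff ℝ ⊤ g ∧
        (∃ ε > 0, ∀ r ∈ Ioo 0 ε, b r = a r ∧ g r = f r) ∧
        (∀ r > 0, 0 < b r ∧
          deriv (deriv g) r = 2 * deriv (deriv b) r / b r ∧
          deriv (deriv b) r
            = deriv g r * deriv b r + (1 - (deriv b r) ^ 2) / b r) ∧
        (∃ C : ℝ, ∀ r > 0,
          |deriv (deriv b) r / b r| ≤ C ∧
          |(1 - (deriv b r) ^ 2) / (b r) ^ 2| ≤ C)) ∧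
    -- (iii) only α' < 0 yields solutions on all of [0, ∞):
    (∀ b g : ℝ → ℝ, ∀ α' : ℝ, α' ≠ 0 →
        ContDiff ℝ ⊤ b → ContDiff ℝ ⊤ g →
        ((fun r => b r - (r + α' * r ^ 3)) =O[nhds (0 : ℝ)] fun r => r ^ 5) →
        (∀ r > 0, 0 < b r ∧
          deriv (deriv g) r = 2 * deriv (deriv b) r / b r ∧
          deriv (deriv b) r
            = deriv g r * deriv b r + (1 - (deriv b r) ^ 2) / b r) →
        (∃ C : ℝ, ∀ r > 0,
          |deriv (deriv b) r / b r| ≤ C ∧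
          |(1 - (deriv b r) ^ 2) / (b r) ^ 2| ≤ C) →
        α' < 0) := by
  have hstart := eventually_one_lt_deriv_and_deriv_deriv_pos_of_isBigO hα (ha.of_le le_top) haexp
  refine ⟨?_, ?_, ?_⟩
  · have hf' := eventually_pos_of_sub_mul_isLittleO (by positivity : 0 < 12 * α)
      (by simpa using hfexp.trans_isLittleO (isLittleO_pow_pow (by norm_num : 1 < 3)))
    exact (nhdsGT_basis 0).eventually_iff.mp ((hstart.and hf').mono fun _ h => ⟨h.1.1, h.2⟩)
  · rintro ⟨b, g, hb, hg, ⟨ε, hε, hba⟩, hsol, C, hC⟩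
    have hba' : EqOn b a (Ioo 0 ε) := fun r hr => (hba r hr).1
    have hb' := hba'.deriv isOpen_Ioo
    have hb'' := hb'.deriv isOpen_Ioo
    refine not_exists_curvature_bound_of_isBryantSolution (hb.of_le le_top) (hg.of_le le_top)
      hsol ?_ ⟨C, fun r hr => (hC r hr).2⟩
    filter_upwards [hstart, Ioo_mem_nhdsGT hε] with r hr hrε
    rwa [hb' hrε, hb'' hrε]
  · intro b g α' hα' hb hg hexp hsol ⟨C, hC⟩
    refine hα'.lt_or_gt.resolve_right fun hpos => ?_
    exact not_exists_curvature_bound_of_isBryantSolution (hb.of_le le_top) (hg.of_le le_top) hsol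
      (eventually_one_lt_deriv_and_deriv_deriv_pos_of_isBigO hpos (hb.of_le le_top) hexp)
      ⟨C, fun r hr => (hC r hr).2⟩

theorem bryant_ode_positive_alpha_singular (a f : ℝ → ℝ) (α : ℝ) (hα : 0 < α)
    (ha : ContDiff ℝ ⊤ a) (hf : ContDiff ℝ ⊤ f)
    (haexp : (fun r => a r - (r + α * r ^ 3)) =O[nhds (0 : ℝ)] fun r => r ^ 5)
    (hfexp : (fun r => deriv f r - 12 * α * r) =O[nhds (0 : ℝ)] fun r => r ^ 3)
    (δ₀ : ℝ) (hδ₀ : 0 < δ₀)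
    (hsol : ∀ r ∈ Ioo 0 δ₀,
        0 < a r ∧
        deriv (deriv f) r = 2 * deriv (deriv a) r / a r ∧
        deriv (deriv a) r
          = deriv f r * deriv a r + (1 - (deriv a r) ^ 2) / a r) :
    -- (i) a' > 1 and f' > 0 near the origin
    (∃ δ > 0, ∀ r ∈ Ioo 0 δ, 1 < deriv a r ∧ 0 < deriv f r) ∧
    -- (ii) no extension to a nonsingular global solution with a > 0 and
    -- bounded curvature
    (¬ ∃ b g : ℝ → ℝ, ContDiff ℝ ⊤ b ∧ ContDiff ℝ ⊤ g ∧
        (∃ ε > 0, ∀ r ∈ Ioo 0 ε, b r = a r ∧ g r = f r) ∧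
        (∀ r > 0, 0 < b r ∧
          deriv (deriv g) r = 2 * deriv (deriv b) r / b r ∧
          deriv (deriv b) r
            = deriv g r * deriv b r + (1 - (deriv b r) ^ 2) / b r) ∧
        (∃ C : ℝ, ∀ r > 0,
          |deriv (deriv b) r / b r| ≤ C ∧
          |(1 - (deriv b r) ^ 2) / (b r) ^ 2| ≤ C)) ∧
    -- (iii) only α' < 0 yields solutions on all of [0, ∞):
    (∀ b g : ℝ → ℝ, ∀ α' : ℝ, α' ≠ 0 →
        ContDiff ℝ ⊤ b → ContDiff ℝ ⊤ g →
        ((fun r => b r - (r + α' * r ^ 3)) =O[nhds (0 : ℝ)] fun r => r ^ 5) →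
        (∀ r > 0, 0 < b r ∧
          deriv (deriv g) r = 2 * deriv (deriv b) r / b r ∧
          deriv (deriv b) r
            = deriv g r * deriv b r + (1 - (deriv b r) ^ 2) / b r) →
        (∃ C : ℝ, ∀ r > 0,
          |deriv (deriv b) r / b r| ≤ C ∧
          |(1 - (deriv b r) ^ 2) / (b r) ^ 2| ≤ C) →
        α' < 0) :=
  bryant_ode_positive_alpha_singular_general a f α hα ha haexp hfexp
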